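/- For all integers N, b, λ with b ≥ 1, λ ≥ 1 and N ≥ 0, the SelectCopy QROM Toffoli cost is strictly smaller than the SelectSwap QROM Toffoli cost: 2·N/λ + 2·b·(λ − 1) + 2·λ − 6 < 2·N/λ + 4·b·(λ − 1), where the inequality is equivalent to 2·λ − 6 < 2·b·(λ − 1) and may be stated in ℚ (or with λ ∣ N in ℤ). -/
import Mathlib

/-- The SelectCopy QROM Toffoli cost is strictly smaller than the SelectSwap QROM
Toffoli cost, stated over ℚ. -/
theorem selectCopy_lt_selectSwap (N b lam : ℤ) (hb : 1 ≤ b) (hlam : 1 ≤ lam) (hN : 0 ≤ N) :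
    2 * (N : ℚ) / (lam : ℚ) + 2 * (b : ℚ) * ((lam : ℚ) - 1) + 2 * (lam : ℚ) - 6
      < 2 * (N : ℚ) / (lam : ℚ) + 4 * (b : ℚ) * ((lam : ℚ) - 1) := by
  have hb' : (1 : ℚ) ≤ (b : ℚ) := by exact_mod_cast hb
  have hl' : (1 : ℚ) ≤ (lam : ℚ) := by exact_mod_cast hlam
  nlinarith [mul_le_mul_of_nonneg_right hb' (by linarith : (0:ℚ) ≤ (lam:ℚ) - 1)]
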